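/- arXiv:1501.03078 — 2 statements merged into one kernel-verified Lean document; each statement's English description precedes it below -/
import Mathlib

section
/- Let N be a semiprime natural number with prime factors p and q (p ≠ q). Let d ∈ ℕ, let b_1, ..., b_d be integers, and for each i let f_i = l_i X + c_i ∈ ℤ[X] be a digit polynomial of N to base b_i of degree 1 (so l_i b_i + c_i = N and l_i ≠ 0). If gcd(c_i, N) = 1 for every i, and gcd(b_j − b_k, N) = 1 for all j ≠ k in {1, ..., d}, then ν(∏_{i=1}^d f_i) = dp + dq − 2d². -/
/-! For `N = p q`, an `x` is suitable for `g` exactly when one, but not both, of `p` and `q`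
divides `g(x)`. By the Chinese remainder theorem, if `g` has `s` roots modulo `p` and `t` roots
modulo `q`, this happens for `s (q - t) + (p - s) t` residues modulo `N`. For
`g = ∏ (l_i X + c_i)` and `r ∈ {p, q}`, `r` cannot divide `l_i` (it would divide
`c_i = N - l_i b_i`), so the roots of `g` modulo `r` are the `b_i`, which are pairwise distinct
modulo `r`: `s = t = d`. -/

/-- `x ∈ Z_N = {0, ..., N−1}` is suitable for `g ∈ ℤ[X]` if `1 < gcd(g(x), N) < N`;
`nu N g` counts the suitable elements. -/
def nu (N : ℕ) (g : Polynomial ℤ) : ℕ :=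
  ((Finset.range N).filter
    (fun (x : ℕ) => 1 < Int.gcd (g.eval ((x : ℤ))) (N : ℤ) ∧
      Int.gcd (g.eval ((x : ℤ))) (N : ℤ) < N)).card

open Finset

theorem Nat.one_lt_gcd_and_gcd_lt_mul_iff_xor_dvd {p q : ℕ} (hp : p.Prime) (hq : q.Prime)
    (hpq : p ≠ q) (n : ℕ) :
    (1 < n.gcd (p * q) ∧ n.gcd (p * q) < p * q) ↔ Xor (p ∣ n) (q ∣ n) := by
  have hgcd : ∀ {r : ℕ}, r.Prime → n.gcd r = if r ∣ n then r else 1 := by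
    intro r hr
    split_ifs with h
    · exact Nat.gcd_eq_right h
    · exact Nat.coprime_comm.mp ((Nat.Prime.coprime_iff_not_dvd hr).mpr h)
  rw [Nat.Coprime.gcd_mul n ((Nat.coprime_primes hp hq).mpr hpq), hgcd hp, hgcd hq]
  have hp_lt : p < p * q := lt_mul_of_one_lt_right hp.pos hq.one_lt
  have hq_lt : q < p * q := lt_mul_of_one_lt_left hq.pos hp.one_lt
  split_ifs <;> simp [Xor, hp.one_lt, hq.one_lt, *]

theorem Int.one_lt_gcd_and_gcd_lt_mul_iff_xor_dvd {p q : ℕ} (hp : p.Prime) (hq : q.Prime)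
    (hpq : p ≠ q) (z : ℤ) :
    (1 < Int.gcd z ((p * q : ℕ) : ℤ) ∧ Int.gcd z ((p * q : ℕ) : ℤ) < p * q) ↔
      Xor ((p : ℤ) ∣ z) ((q : ℤ) ∣ z) := by
  rw [Int.gcd_eq_natAbs, Int.natAbs_natCast, Int.natCast_dvd, Int.natCast_dvd]
  exact Nat.one_lt_gcd_and_gcd_lt_mul_iff_xor_dvd hp hq hpq _

theorem Int.not_natCast_dvd_of_gcd_eq_one {r : ℕ} (hr : r.Prime) {a N : ℤ} (hrN : (r : ℤ) ∣ N)
    (ha : Int.gcd a N = 1) : ¬ (r : ℤ) ∣ a := fun hra =>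
  (Nat.prime_iff_prime_int.mp hr).not_isUnit
    ((Int.isCoprime_iff_gcd_eq_one.mpr ha).isUnit_of_dvd' hra hrN)

theorem Int.natCast_dvd_mul_add_iff_intCast_eq {r : ℕ} (hr : r.Prime) {l b c : ℤ}
    (hc : ¬ (r : ℤ) ∣ c) (hroot : (r : ℤ) ∣ l * b + c) (x : ℤ) :
    (r : ℤ) ∣ l * x + c ↔ (b : ZMod r) = x := by
  have := Fact.mk hr
  have hl : (l : ZMod r) ≠ 0 := by
    rw [Ne, ZMod.intCast_zmod_eq_zero_iff_dvd]
    exact fun h => hc ((dvd_add_right (h.mul_right b)).mp hroot)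
  rw [← ZMod.intCast_zmod_eq_zero_iff_dvd] at hroot ⊢
  push_cast at hroot ⊢
  have hfactor : (l : ZMod r) * x + c = l * (x - b) := by linear_combination hroot
  rw [hfactor, mul_eq_zero, sub_eq_zero, or_iff_right hl, eq_comm]

theorem Int.natCast_dvd_eval_prod_linear_iff {ι : Type*} [Fintype ι] {r : ℕ} (hr : r.Prime)
    {l b c : ι → ℤ} (hc : ∀ i, ¬ (r : ℤ) ∣ c i) (hroot : ∀ i, (r : ℤ) ∣ l i * b i + c i)
    (x : ℤ) :
    (r : ℤ) ∣ (∏ i, (Polynomial.C (l i) * Polynomial.X + Polynomial.C (c i))).eval x ↔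
      (x : ZMod r) ∈ univ.image fun i => (b i : ZMod r) := by
  simp only [Polynomial.eval_prod, Polynomial.eval_add, Polynomial.eval_mul,
    Polynomial.eval_C, Polynomial.eval_X]
  rw [(Nat.prime_iff_prime_int.mp hr).dvd_finsetProd_iff]
  simp only [mem_univ, true_and, mem_image,
    Int.natCast_dvd_mul_add_iff_intCast_eq hr (hc _) (hroot _)]

theorem card_image_intCast_zmod {ι : Type*} [Fintype ι] {r : ℕ} (hr : r.Prime) {N : ℤ}
    (hrN : (r : ℤ) ∣ N) {b : ι → ℤ} (hb : ∀ j k, j ≠ k → Int.gcd (b j - b k) N = 1) :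
    #(univ.image fun i => (b i : ZMod r)) = Fintype.card ι := by
  rw [card_image_of_injective _ ?_, card_univ]
  intro j k hjk
  by_contra hne
  exact Int.not_natCast_dvd_of_gcd_eq_one hr hrN (hb j k hne)
    ((ZMod.intCast_eq_intCast_iff_dvd_sub _ _ _).mp hjk.symm)

theorem card_filter_range_mul_eq_card_filter_zmod_prod {m n : ℕ} [NeZero m] [NeZero n]
    (hmn : m.Coprime n) (P : ZMod m × ZMod n → Prop) [DecidablePred P] :
    #((range (m * n)).filter fun x : ℕ => P ((x : ZMod m), (x : ZMod n))) =
      #(univ.filter P) := by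
  set f : ℕ → ZMod m × ZMod n := fun x => ((x : ZMod m), (x : ZMod n))
  have hinj : Set.InjOn f (range (m * n)) := by
    intro x hx y hy hxy
    simp only [f, Prod.mk.injEq, ZMod.natCast_eq_natCast_iff] at hxy
    exact ((Nat.modEq_and_modEq_iff_modEq_mul hmn).mp hxy).eq_of_lt_of_lt
      (mem_range.mp hx) (mem_range.mp hy)
  have himage : (range (m * n)).image f = univ := eq_univ_of_card _ <| by
    rw [card_image_of_injOn hinj, card_range, Fintype.card_prod, ZMod.card, ZMod.card]
  rw [← himage, filter_image, card_image_of_injOn (hinj.mono (filter_subset _ _))]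

theorem card_filter_xor_mem {α β : Type*} [Fintype α] [Fintype β] [DecidableEq α]
    [DecidableEq β] (S : Finset α) (T : Finset β) :
    (#(univ.filter fun w : α × β => Xor (w.1 ∈ S) (w.2 ∈ T)) : ℤ) =
      #S * (Fintype.card β - #T) + (Fintype.card α - #S) * #T := by
  have hsplit : univ.filter (fun w : α × β => Xor (w.1 ∈ S) (w.2 ∈ T)) =
      S ×ˢ Tᶜ ∪ Sᶜ ×ˢ T := by
    ext w
    simp only [mem_filter_univ, mem_union, mem_product, mem_compl, Xor, and_comm]
  have hdisj : Disjoint (S ×ˢ Tᶜ) (Sᶜ ×ˢ T) :=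
    disjoint_left.mpr fun w hw hw' => (mem_compl.mp (mem_product.mp hw').1) (mem_product.mp hw).1
  rw [hsplit, card_union_of_disjoint hdisj, card_product, card_product, card_compl, card_compl]
  push_cast [Nat.cast_sub (card_le_univ S), Nat.cast_sub (card_le_univ T)]
  ring

theorem nu_mul_eq_of_natCast_dvd_eval_iff {p q : ℕ} (hp : p.Prime) (hq : q.Prime) (hpq : p ≠ q)
    (g : Polynomial ℤ) (S : Finset (ZMod p)) (T : Finset (ZMod q))
    (hS : ∀ x : ℤ, (p : ℤ) ∣ g.eval x ↔ (x : ZMod p) ∈ S)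
    (hT : ∀ x : ℤ, (q : ℤ) ∣ g.eval x ↔ (x : ZMod q) ∈ T) :
    (nu (p * q) g : ℤ) = #S * (q - #T) + (p - #S) * #T := by
  have := Fact.mk hp
  have := Fact.mk hq
  have hsuitable : ∀ x : ℕ,
      (1 < Int.gcd (g.eval (x : ℤ)) ((p * q : ℕ) : ℤ) ∧
        Int.gcd (g.eval (x : ℤ)) ((p * q : ℕ) : ℤ) < p * q) ↔
      Xor ((x : ZMod p) ∈ S) ((x : ZMod q) ∈ T) := by
    intro x
    rw [Int.one_lt_gcd_and_gcd_lt_mul_iff_xor_dvd hp hq hpq, hS, hT, Int.cast_natCast,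
      Int.cast_natCast]
  rw [nu, filter_congr fun x _ => hsuitable x,
    card_filter_range_mul_eq_card_filter_zmod_prod ((Nat.coprime_primes hp hq).mpr hpq)
      fun w => Xor (w.1 ∈ S) (w.2 ∈ T),
    card_filter_xor_mem, ZMod.card, ZMod.card]

theorem nu_prod_linear_digit_polys_general (N p q : ℕ) (hp : p.Prime) (hq : q.Prime)
    (hpq : p ≠ q) (hN : N = p * q) (d : ℕ)
    (b l c : Fin d → ℤ)
    (hdig : ∀ i, l i * b i + c i = (N : ℤ))
    (hc : ∀ i, Int.gcd (c i) (N : ℤ) = 1)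
    (hb : ∀ j k, j ≠ k → Int.gcd (b j - b k) (N : ℤ) = 1) :
    (nu N (∏ i, (Polynomial.C (l i) * Polynomial.X + Polynomial.C (c i))) : ℤ)
      = d * p + d * q - 2 * d ^ 2 := by
  subst hN
  have hpN : (p : ℤ) ∣ ((p * q : ℕ) : ℤ) := by exact_mod_cast dvd_mul_right p q
  have hqN : (q : ℤ) ∣ ((p * q : ℕ) : ℤ) := by exact_mod_cast dvd_mul_left q p
  rw [nu_mul_eq_of_natCast_dvd_eval_iff hp hq hpq _ _ _
      (Int.natCast_dvd_eval_prod_linear_iff hp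
        (fun i => Int.not_natCast_dvd_of_gcd_eq_one hp hpN (hc i)) (fun i => hdig i ▸ hpN))
      (Int.natCast_dvd_eval_prod_linear_iff hq
        (fun i => Int.not_natCast_dvd_of_gcd_eq_one hq hqN (hc i)) (fun i => hdig i ▸ hqN)),
    card_image_intCast_zmod hp hpN hb, card_image_intCast_zmod hq hqN hb, Fintype.card_fin]
  ring

/-- Let `N = p * q` be semiprime with distinct primes `p, q`. Let `f_i = l_i X + c_i`
be digit polynomials of `N` to bases `b_i` of degree 1 (so `l_i b_i + c_i = N`, `l_i ≠ 0`).
If `gcd(c_i, N) = 1` for all `i` and `gcd(b_j − b_k, N) = 1` for all `j ≠ k`, then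
`ν(∏ f_i) = dp + dq − 2d²`. -/
theorem nu_prod_linear_digit_polys (N p q : ℕ) (hp : p.Prime) (hq : q.Prime)
    (hpq : p ≠ q) (hN : N = p * q) (d : ℕ)
    (b l c : Fin d → ℤ)
    (hl : ∀ i, l i ≠ 0)
    (hdig : ∀ i, l i * b i + c i = (N : ℤ))
    (hc : ∀ i, Int.gcd (c i) (N : ℤ) = 1)
    (hb : ∀ j k, j ≠ k → Int.gcd (b j - b k) (N : ℤ) = 1) :
    (nu N (∏ i, (Polynomial.C (l i) * Polynomial.X + Polynomial.C (c i))) : ℤ)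
      = d * p + d * q - 2 * d ^ 2 :=
  nu_prod_linear_digit_polys_general N p q hp hq hpq hN d b l c hdig hc hb
end

section
/- Let N be a semiprime natural number with prime factors p and q (p ≠ q). Let b be an integer and f = n₂X² + n₁X + n₀ ∈ ℤ[X] a digit polynomial of N to base b of degree 2 (so f(b) = N and n₂ ≠ 0). If gcd(n₂ · b, N) = 1 and gcd(N, n₂b² − n₀) = 1, then ν(f) = 2p + 2q − 8. -/
/-!
A residue `x` is suitable for `f` exactly when one of `p`, `q` divides `f(x)` and the other does
not. Modulo each prime `r ∣ N` the polynomial `f` has the root `b` (because `f(b) = N`) and, by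
Vieta, the second root `n₀ / (n₂ b)`; these differ because `n₂ b² ≢ n₀`, so `f` has exactly two
roots mod `r`. By the Chinese remainder theorem the suitable `x` correspond to the pairs
(root mod `p`, non-root mod `q`) and (non-root mod `p`, root mod `q`): `2 (q - 2) + 2 (p - 2)`.
-/

open Finset

theorem card_filter_range_eq_card_filter_zmod (n : ℕ) [NeZero n] (P : ZMod n → Prop)
    [DecidablePred P] : #{x ∈ range n | P ((x : ℕ) : ZMod n)} = #{z : ZMod n | P z} := by
  refine card_nbij' (fun x => (x : ZMod n)) ZMod.val ?_ ?_ ?_ ?_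
  · intro x hx
    simp_all
  · intro z hz
    simp_all [ZMod.val_lt]
  · intro x hx
    exact ZMod.val_cast_of_lt (mem_range.mp (mem_filter.mp hx).1)
  · intro z _
    exact ZMod.natCast_zmod_val z

theorem card_filter_range_mul_eq_card_filter_prod {m n : ℕ} [NeZero m] [NeZero n]
    (h : m.Coprime n) (P : ZMod m × ZMod n → Prop) [DecidablePred P] :
    #{x ∈ range (m * n) | P (((x : ℕ) : ZMod m), ((x : ℕ) : ZMod n))} = #{y | P y} := by
  have hcast (x : ℕ) : ((x : ZMod m), (x : ZMod n)) = ZMod.chineseRemainder h x := by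
    ext <;> simp
  simp only [hcast]
  rw [card_filter_range_eq_card_filter_zmod (m * n) (fun z => P (ZMod.chineseRemainder h z))]
  exact card_equiv (ZMod.chineseRemainder h).toEquiv (by simp)

theorem card_filter_xor_prod {α β : Type*} [Fintype α] [Fintype β] (A : α → Prop)
    (B : β → Prop) [DecidablePred A] [DecidablePred B] :
    #{y : α × β | Xor (A y.1) (B y.2)} =
      #{u | A u} * (Fintype.card β - #{v | B v}) + (Fintype.card α - #{u | A u}) * #{v | B v} := by
  classical
  rw [← card_compl, ← card_compl, compl_filter, compl_filter, ← card_product, ← card_product,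
    ← card_union_of_disjoint]
  · congr 1
    ext ⟨u, v⟩
    simp only [mem_filter_univ, mem_union, mem_product, xor_iff_or_and_not_and]
    tauto
  · rw [disjoint_left]
    rintro ⟨u, v⟩ h₁ h₂
    simp only [mem_filter_univ, mem_product] at h₁ h₂
    exact h₂.1 h₁.1

theorem one_lt_gcd_lt_mul_iff_xor_dvd {p q : ℕ} (hp : p.Prime) (hq : q.Prime) (hpq : p ≠ q)
    (k : ℕ) : (1 < k.gcd (p * q) ∧ k.gcd (p * q) < p * q) ↔ Xor (p ∣ k) (q ∣ k) := by
  have hgcd {r : ℕ} (hr : r.Prime) : k.gcd r = if r ∣ k then r else 1 := by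
    split_ifs with h
    · exact Nat.gcd_eq_right h
    · exact (Nat.coprime_comm.mp (hr.coprime_iff_not_dvd.mpr h))
  have := hp.one_lt
  have := hq.one_lt
  rw [Nat.Coprime.gcd_mul k ((Nat.coprime_primes hp hq).mpr hpq), hgcd hp, hgcd hq]
  by_cases hpk : p ∣ k <;> by_cases hqk : q ∣ k <;> simp [hpk, hqk, Xor] <;>
    constructor <;> nlinarith

theorem one_lt_intGcd_lt_mul_iff_xor {p q : ℕ} (hp : p.Prime) (hq : q.Prime) (hpq : p ≠ q)
    (m : ℤ) : (1 < m.gcd (p * q : ℕ) ∧ m.gcd (p * q : ℕ) < p * q) ↔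
      Xor ((m : ZMod p) = 0) ((m : ZMod q) = 0) := by
  simp only [Int.gcd_eq_natAbs, Int.natAbs_natCast, ZMod.intCast_zmod_eq_zero_iff_dvd,
    Int.natCast_dvd]
  exact one_lt_gcd_lt_mul_iff_xor_dvd hp hq hpq m.natAbs

theorem quadratic_eq_zero_iff_of_root {F : Type*} [Field F] {a c d β : F} (ha : a ≠ 0)
    (hβ : β ≠ 0) (hroot : a * β ^ 2 + c * β + d = 0) (u : F) :
    a * u ^ 2 + c * u + d = 0 ↔ u = β ∨ u = d / (a * β) := by
  have hvieta : a * u ^ 2 + c * u + d = a * ((u - β) * (u - d / (a * β))) := by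
    field_simp
    linear_combination u * hroot
  simp [hvieta, ha, sub_eq_zero]

theorem card_filter_quadratic_eq_zero {F : Type*} [Field F] [Fintype F] [DecidableEq F]
    {a c d β : F} (ha : a ≠ 0) (hroot : a * β ^ 2 + c * β + d = 0) (hne : a * β ^ 2 ≠ d) :
    #{u | a * u ^ 2 + c * u + d = 0} = 2 := by
  have hβ : β ≠ 0 := by
    rintro rfl
    exact hne (by linear_combination -hroot)
  have hdistinct : β ≠ d / (a * β) := by
    rw [ne_eq, eq_div_iff (mul_ne_zero ha hβ)]
    exact fun h => hne (by linear_combination h)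
  convert card_pair hdistinct using 2
  ext u
  simp [quadratic_eq_zero_iff_of_root ha hβ hroot]

theorem intCast_ne_zero_of_gcd_eq_one {r N : ℕ} (hrp : r.Prime) (hr : r ∣ N) {a : ℤ}
    (h : a.gcd N = 1) : (a : ZMod r) ≠ 0 := by
  rw [ne_eq, ZMod.intCast_zmod_eq_zero_iff_dvd]
  intro hra
  have hr1 := Int.dvd_coe_gcd hra (Int.natCast_dvd_natCast.mpr hr)
  rw [h] at hr1
  exact hrp.not_dvd_one (by exact_mod_cast hr1)

theorem card_filter_digit_quadratic_eq_zero {r N : ℕ} [Fact r.Prime] (hr : r ∣ N)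
    {b n2 n1 n0 : ℤ} (hdig : n2 * b ^ 2 + n1 * b + n0 = (N : ℤ))
    (hcop : Int.gcd (n2 * b) (N : ℤ) = 1) (hcop2 : Int.gcd (N : ℤ) (n2 * b ^ 2 - n0) = 1) :
    #{u : ZMod r | (n2 : ZMod r) * u ^ 2 + n1 * u + n0 = 0} = 2 := by
  have hn2b := intCast_ne_zero_of_gcd_eq_one Fact.out hr hcop
  have hsimple := intCast_ne_zero_of_gcd_eq_one Fact.out hr ((Int.gcd_comm _ _).trans hcop2)
  push_cast at hn2b hsimple
  refine card_filter_quadratic_eq_zero (β := b) (left_ne_zero_of_mul hn2b) ?_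
    (sub_ne_zero.mp hsimple)
  have hroot := congrArg (Int.cast : ℤ → ZMod r) hdig
  push_cast at hroot
  rwa [(ZMod.natCast_eq_zero_iff N r).mpr hr] at hroot

theorem nu_quadratic_digit_poly_general (N p q : ℕ) (hp : p.Prime) (hq : q.Prime)
    (hpq : p ≠ q) (hN : N = p * q) (b n2 n1 n0 : ℤ)
    (hdig : n2 * b ^ 2 + n1 * b + n0 = (N : ℤ))
    (hcop : Int.gcd (n2 * b) (N : ℤ) = 1)
    (hcop2 : Int.gcd (N : ℤ) (n2 * b ^ 2 - n0) = 1) :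
    (nu N (Polynomial.C n2 * Polynomial.X ^ 2 + Polynomial.C n1 * Polynomial.X +
        Polynomial.C n0) : ℤ) = 2 * p + 2 * q - 8 := by
  subst hN
  have := Fact.mk hp
  have := Fact.mk hq
  have heval (x : ℕ) : (Polynomial.C n2 * Polynomial.X ^ 2 + Polynomial.C n1 * Polynomial.X +
      Polynomial.C n0).eval (x : ℤ) = n2 * x ^ 2 + n1 * x + n0 := by
    simp
  simp only [nu, heval, one_lt_intGcd_lt_mul_iff_xor hp hq hpq]
  push_cast
  rw [card_filter_range_mul_eq_card_filter_prod ((Nat.coprime_primes hp hq).mpr hpq)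
      (fun y => Xor ((n2 : ZMod p) * y.1 ^ 2 + n1 * y.1 + n0 = 0)
        ((n2 : ZMod q) * y.2 ^ 2 + n1 * y.2 + n0 = 0))]
  rw [card_filter_xor_prod (fun u : ZMod p => (n2 : ZMod p) * u ^ 2 + n1 * u + n0 = 0)
      (fun v : ZMod q => (n2 : ZMod q) * v ^ 2 + n1 * v + n0 = 0),
    card_filter_digit_quadratic_eq_zero (dvd_mul_right p q) hdig hcop hcop2,
    card_filter_digit_quadratic_eq_zero (dvd_mul_left q p) hdig hcop hcop2, ZMod.card, ZMod.card]
  push_cast [Nat.cast_sub hp.two_le, Nat.cast_sub hq.two_le]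
  ring

/-- Let `N = p * q` be semiprime with distinct primes `p, q`, and
`f = n₂X² + n₁X + n₀ ∈ ℤ[X]` a digit polynomial of `N` to base `b` of degree 2
(so `f(b) = N`, `n₂ ≠ 0`). If `gcd(n₂·b, N) = 1` and `gcd(N, n₂b² − n₀) = 1`,
then `ν(f) = 2p + 2q − 8`. -/
theorem nu_quadratic_digit_poly (N p q : ℕ) (hp : p.Prime) (hq : q.Prime)
    (hpq : p ≠ q) (hN : N = p * q) (b n2 n1 n0 : ℤ)
    (hn2 : n2 ≠ 0)
    (hdig : n2 * b ^ 2 + n1 * b + n0 = (N : ℤ))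
    (hcop : Int.gcd (n2 * b) (N : ℤ) = 1)
    (hcop2 : Int.gcd (N : ℤ) (n2 * b ^ 2 - n0) = 1) :
    (nu N (Polynomial.C n2 * Polynomial.X ^ 2 + Polynomial.C n1 * Polynomial.X +
        Polynomial.C n0) : ℤ) = 2 * p + 2 * q - 8 :=
  nu_quadratic_digit_poly_general N p q hp hq hpq hN b n2 n1 n0 hdig hcop hcop2
end
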